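/- arXiv:2010.09195 — 2 statements merged into one kernel-verified Lean document; each statement's English description precedes it below -/
import Mathlib

section
/- For every fixed angle θ ∈ (0, π/2), the function d ↦ f(d, θ) is strictly decreasing on the interval [L/cos θ, ∞). (This is the second monotonicity claim of Lemma 1: ∂f(d, θ)/∂d < 0 for d ≥ L/cos θ.) -/
/-- Distance from the UAV (at polar coordinates `(d, θ)` relative to Willie) to Bob. -/
noncomputable def db (L d θ : ℝ) : ℝ :=
  Real.sqrt (L ^ 2 + d ^ 2 - 2 * d * L * Real.cos θ)

/-- Elevation angle from Bob to the UAV (in radians). -/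
noncomputable def θb (L d θ : ℝ) : ℝ :=
  Real.arcsin (d * Real.sin θ / db L d θ)

/-- Probability of a LoS component in the UAV-to-Bob channel. -/
noncomputable def pb (a b L d θ : ℝ) : ℝ :=
  1 / (1 + a * Real.exp (-b * ((180 / Real.pi) * θb L d θ - a)))

/-- The objective `f(d, θ) = d_b^{ξ_L} · p_b`. -/
noncomputable def f (a b L ξL d θ : ℝ) : ℝ :=
  db L d θ ^ ξL * pb a b L d θ

/-!
Write `c = cos θ`, `s = sin θ`. Since `d_b² = (d - L c)² + (L s)²`, the distance `d_b` is strictly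
increasing for `d ≥ L c`, hence `d_b^{ξ_L}` is strictly decreasing there. For `L ≤ d c`,
`(d / d_b)²` is antitone because `y² d_b(x)² ≤ x² d_b(y)²` reduces to
`L (y - x) (L (x + y) - 2 x y c) ≤ 0`; so the elevation angle `θ_b` and with it the positive
factor `p_b` decrease. As `L c ≤ L / c`, both effects hold on `[L / c, ∞)`.
-/

open Real Set

section Geometry

variable {L θ : ℝ}

theorem db_sq_eq (L d θ : ℝ) :
    db L d θ ^ 2 = (d - L * cos θ) ^ 2 + (L * sin θ) ^ 2 := by
  have h : L ^ 2 + d ^ 2 - 2 * d * L * cos θ = (d - L * cos θ) ^ 2 + (L * sin θ) ^ 2 := by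
    linear_combination L ^ 2 * (sin_sq_add_cos_sq θ).symm
  rw [db, h, sq_sqrt (by positivity)]

theorem db_pos (d : ℝ) (hL : L ≠ 0) (hs : sin θ ≠ 0) : 0 < db L d θ := by
  have h : 0 < db L d θ ^ 2 := by rw [db_sq_eq]; positivity
  exact lt_of_le_of_ne (sqrt_nonneg _) (fun h0 => by simp [← h0] at h)

theorem db_strictMonoOn (L θ : ℝ) : StrictMonoOn (fun d => db L d θ) (Ici (L * cos θ)) := by
  intro x hx y hy hxy
  have hsq : db L x θ ^ 2 < db L y θ ^ 2 := by
    rw [db_sq_eq, db_sq_eq]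
    have := pow_lt_pow_left₀ (sub_lt_sub_right hxy (L * cos θ)) (sub_nonneg.2 hx) two_ne_zero
    linarith
  exact lt_of_pow_lt_pow_left₀ 2 (sqrt_nonneg _) hsq

theorem div_db_antitoneOn (hL : 0 < L) (hc : 0 < cos θ) (hs : sin θ ≠ 0) :
    AntitoneOn (fun d => d / db L d θ) (Ici (L / cos θ)) := by
  intro x hx y hy hxy
  simp only [mem_Ici, div_le_iff₀ hc] at hx hy
  have hx0 : 0 ≤ x := by nlinarith
  have hy0 : 0 ≤ y := by nlinarith
  have hdbx := db_pos x hL.ne' hs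
  have hdby := db_pos y hL.ne' hs
  show y / db L y θ ≤ x / db L x θ
  rw [div_le_div_iff₀ hdby hdbx]
  refine (pow_le_pow_iff_left₀ (by positivity) (by positivity) two_ne_zero).1 ?_
  have hsum : L * (x + y) ≤ 2 * x * y * cos θ := by nlinarith
  have key : 0 ≤ L * (y - x) * (2 * x * y * cos θ - L * (x + y)) :=
    mul_nonneg (mul_nonneg hL.le (sub_nonneg.2 hxy)) (sub_nonneg.2 hsum)
  rw [mul_pow, mul_pow, db_sq_eq, db_sq_eq]
  linear_combination key + (y ^ 2 - x ^ 2) * L ^ 2 * (sin_sq_add_cos_sq θ)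

theorem θb_antitoneOn (hL : 0 < L) (hc : 0 < cos θ) (hs : 0 < sin θ) :
    AntitoneOn (fun d => θb L d θ) (Ici (L / cos θ)) := by
  intro x hx y hy hxy
  have h := mul_le_mul_of_nonneg_left (div_db_antitoneOn hL hc hs.ne' hx hy hxy) hs.le
  refine arcsin_le_arcsin ?_
  simpa only [mul_comm _ (sin θ), mul_div_assoc] using h

end Geometry

section LoSProbability

variable {a b L d θ d' θ' : ℝ}

theorem pb_pos (ha : 0 ≤ a) : 0 < pb a b L d θ := by
  unfold pb; positivity

theorem pb_le_pb (ha : 0 ≤ a) (hb : 0 ≤ b) (h : θb L d θ ≤ θb L d' θ') :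
    pb a b L d θ ≤ pb a b L d' θ' := by
  unfold pb
  refine one_div_le_one_div_of_le (by positivity) (add_le_add_right ?_ 1)
  refine mul_le_mul_of_nonneg_left (exp_le_exp.2 ?_) ha
  have := mul_le_mul_of_nonneg_left h (div_nonneg (by norm_num : (0 : ℝ) ≤ 180) pi_pos.le)
  nlinarith

end LoSProbability

/-- For fixed `θ ∈ (0, π/2)`, `d ↦ f(d, θ)` is strictly decreasing on `[L/cos θ, ∞)`. -/
theorem stmt_1 (a b L ξL θ : ℝ) (ha : 0 < a) (hb : 0 < b) (hL : 0 < L)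
    (hξ : ξL < 0) (hθ : θ ∈ Set.Ioo 0 (Real.pi / 2)) :
    StrictAntiOn (fun d => f a b L ξL d θ) (Set.Ici (L / Real.cos θ)) := by
  obtain ⟨hθ0, hθ2⟩ := hθ
  have hc : 0 < cos θ := cos_pos_of_mem_Ioo ⟨by linarith [pi_pos], hθ2⟩
  have hs : 0 < sin θ := sin_pos_of_pos_of_lt_pi hθ0 (by linarith [pi_pos])
  have hLc : L * cos θ ≤ L / cos θ := by
    rw [le_div_iff₀ hc, mul_assoc, ← sq]
    exact mul_le_of_le_one_right hL.le (pow_le_one₀ hc.le (cos_le_one θ))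
  intro x hx y hy hxy
  have hdb : db L x θ < db L y θ :=
    db_strictMonoOn L θ (Ici_subset_Ici.2 hLc hx) (Ici_subset_Ici.2 hLc hy) hxy
  have hpb : pb a b L y θ ≤ pb a b L x θ :=
    pb_le_pb ha.le hb.le (θb_antitoneOn hL hc hs hx hy hxy.le)
  calc f a b L ξL y θ ≤ db L y θ ^ ξL * pb a b L x θ :=
        mul_le_mul_of_nonneg_left hpb (rpow_pos_of_pos (db_pos y hL.ne' hs.ne') ξL).le
    _ < f a b L ξL x θ :=
        mul_lt_mul_of_pos_right (rpow_lt_rpow_of_neg (db_pos x hL.ne' hs.ne') hdb hξ) (pb_pos ha.le)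
end

section
/- For every fixed angle θ ∈ (0, π/2), the function d ↦ p_b(d, θ) is strictly increasing on the interval (0, L/cos θ). (In the paper's Appendix A this follows from the derivative formula (30), whose sign equals the sign of L − d·cos θ.) -/
open Real Set

theorem strictMono_logistic {a b c : ℝ} (m : ℝ) (ha : 0 < a) (hb : 0 < b) (hc : 0 < c) :
    StrictMono fun x => 1 / (1 + a * exp (-b * (c * x - m))) := by
  intro x y hxy
  apply one_div_lt_one_div_of_lt (by positivity)
  have : exp (-b * (c * y - m)) < exp (-b * (c * x - m)) :=
    exp_lt_exp.2 (by nlinarith [mul_pos hb hc])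
  gcongr

theorem arcsin_div_sqrt_sq_add_sq {x : ℝ} (y : ℝ) (hx : 0 < x) :
    arcsin (y / √(x ^ 2 + y ^ 2)) = arctan (y / x) := by
  have hxy : x ^ 2 + y ^ 2 = x ^ 2 * (1 + (y / x) ^ 2) := by field_simp
  rw [arctan_eq_arcsin, hxy, sqrt_mul (sq_nonneg x), sqrt_sq hx.le, div_mul_eq_div_div_swap,
    div_right_comm]

theorem db_eq_sqrt_sq_add_sq (L d θ : ℝ) :
    db L d θ = √((L - d * cos θ) ^ 2 + (d * sin θ) ^ 2) := by
  rw [db]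
  congr 1
  linear_combination -d ^ 2 * sin_sq_add_cos_sq θ

theorem θb_eq_arctan {L d θ : ℝ} (hd : d * cos θ < L) :
    θb L d θ = arctan (d * sin θ / (L - d * cos θ)) := by
  rw [θb, db_eq_sqrt_sq_add_sq, arcsin_div_sqrt_sq_add_sq _ (sub_pos.2 hd)]

theorem strictMonoOn_mul_sin_div_sub_mul_cos {L θ : ℝ} (hL : 0 < L) (hθ : 0 < sin θ) :
    StrictMonoOn (fun d => d * sin θ / (L - d * cos θ)) {d | d * cos θ < L} := by
  intro d₁ h₁ d₂ h₂ h
  rw [div_lt_div_iff₀ (sub_pos.2 h₁) (sub_pos.2 h₂)]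
  nlinarith [mul_pos hθ hL]

theorem strictMonoOn_θb {L θ : ℝ} (hL : 0 < L) (hθ : 0 < sin θ) :
    StrictMonoOn (fun d => θb L d θ) {d | d * cos θ < L} := by
  intro d₁ h₁ d₂ h₂ h
  dsimp only
  rw [θb_eq_arctan h₁, θb_eq_arctan h₂]
  exact arctan_strictMono (strictMonoOn_mul_sin_div_sub_mul_cos hL hθ h₁ h₂ h)

theorem stmt_4_general (a b L θ : ℝ) (ha : 0 < a) (hb : 0 < b) (hL : 0 < L)
    (hθ : θ ∈ Set.Ioo 0 (Real.pi / 2)) :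
    StrictMonoOn (fun d => pb a b L d θ) (Set.Ioo 0 (L / Real.cos θ)) := by
  have hcos : 0 < cos θ := cos_pos_of_mem_Ioo ⟨by linarith [hθ.1, pi_pos], hθ.2⟩
  have hsin : 0 < sin θ := sin_pos_of_pos_of_lt_pi hθ.1 (by linarith [hθ.2, pi_pos])
  have hsub : Ioo 0 (L / cos θ) ⊆ {d | d * cos θ < L} := fun d hd => (lt_div_iff₀ hcos).1 hd.2
  exact (strictMono_logistic a ha hb (by positivity)).comp_strictMonoOn
    ((strictMonoOn_θb hL hsin).mono hsub)

/-- For fixed `θ ∈ (0, π/2)`, `d ↦ p_b(d, θ)` is strictly increasing on `(0, L/cos θ)`. -/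
theorem stmt_4 (a b L ξL θ : ℝ) (ha : 0 < a) (hb : 0 < b) (hL : 0 < L)
    (hξ : ξL < 0) (hθ : θ ∈ Set.Ioo 0 (Real.pi / 2)) :
    StrictMonoOn (fun d => pb a b L d θ) (Set.Ioo 0 (L / Real.cos θ)) :=
  stmt_4_general a b L θ ha hb hL hθ
end
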